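/- Let D = d₁ d₂, let F₁, …, F_D be d₂ × d₁ complex matrices with tr(F_α* F_β) = δ_{αβ}, let λ₁, …, λ_D > 0, and define φ(a) = Σ_{α=2}^{D} λ_α F_α a F_α* − λ₁ F₁ a F₁* on M_{d₁}(ℂ). Let 1 ≤ k < min(d₁, d₂) and suppose 0 < g_k(F₁) ≤ g_{k+1}(F₁) < 1. If λ₁ g_{k+1}(F₁) / (1 − g_{k+1}(F₁)) > λ_α ≥ λ₁ g_k(F₁) / (1 − g_k(F₁)) for every α ∈ {2, …, D}, then φ is k-positive but not (k+1)-positive. -/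

import Mathlib

/-!
Write `φ = ∑_α c_α F_α (·) F_αᴴ` with `c_{α₁} = -λ₁`. For `a = Bᴴ B`, the quadratic form of
`(id_k ⊗ φ)(a)` at a vector `y` is a sum, over the rows of `B`, of `∑_α c_α |tr(F_αᴴ N)|²` with
`N = Y X` of rank at most `k`, and every such product occurs. As the `F_α` are an orthonormal
basis, `∑_α |tr(F_αᴴ N)|² = ‖N‖²`. Projecting `F₁` onto the column space of `N`, Cauchy–Schwarz
and Ky Fan's maximum principle give `|tr(F₁ᴴ N)|² ≤ g_k(F₁) ‖N‖²`, and the lower bound on the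
`λ_α` makes every such form nonnegative. For `k + 1`, the choice `N = P F₁`, with `P` the
projection onto the top `k + 1` eigenvectors of `F₁ F₁ᴴ`, attains
`tr(F₁ᴴ N) = ‖N‖² = g_{k+1}(F₁)`, and the strict upper bound on the `λ_α` makes the form negative.
-/

open scoped ComplexOrder
open Matrix

/-- A linear map `φ : M_{d₁}(ℂ) → M_{d₂}(ℂ)` is `k`-positive if `id_k ⊗ φ` sends
positive semidefinite matrices to positive semidefinite matrices. -/
def kPositive (d₁ d₂ k : ℕ)
    (φ : Matrix (Fin d₁) (Fin d₁) ℂ →ₗ[ℂ] Matrix (Fin d₂) (Fin d₂) ℂ) : Prop :=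
  ∀ a : Matrix (Fin k × Fin d₁) (Fin k × Fin d₁) ℂ, a.PosSemidef →
    (Matrix.of fun p q : Fin k × Fin d₂ =>
      φ (Matrix.of fun x y => a (p.1, x) (q.1, y)) p.2 q.2).PosSemidef

/-- The sum of the `k` largest values of a function on a finite index type. -/
noncomputable def sumKLargest {n : Type*} [Fintype n] (k : ℕ) (f : n → ℝ) : ℝ :=
  sSup {x | ∃ s : Finset n, s.card = k ∧ x = ∑ i ∈ s, f i}

/-- `gk k F` is the sum of the `k` largest eigenvalues of `F * Fᴴ`. -/
noncomputable def gk {d₂ d₁ : ℕ} (k : ℕ) (F : Matrix (Fin d₂) (Fin d₁) ℂ) : ℝ :=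
  sumKLargest k (Matrix.isHermitian_mul_conjTranspose_self F).eigenvalues

section SumKLargest

variable {n : Type*} [Fintype n] (k : ℕ) (f : n → ℝ)

lemma finite_sumKLargest_set : {x | ∃ s : Finset n, s.card = k ∧ x = ∑ i ∈ s, f i}.Finite :=
  (Set.finite_range fun s : Finset n => ∑ i ∈ s, f i).subset
    (by rintro _ ⟨s, -, rfl⟩; exact ⟨s, rfl⟩)

lemma sum_le_sumKLargest {s : Finset n} (hs : s.card = k) : ∑ i ∈ s, f i ≤ sumKLargest k f :=
  le_csSup (finite_sumKLargest_set k f).bddAbove ⟨s, hs, rfl⟩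

lemma exists_card_eq_sum_eq_sumKLargest (hk : k ≤ Fintype.card n) :
    ∃ T : Finset n, T.card = k ∧ ∑ i ∈ T, f i = sumKLargest k f := by
  obtain ⟨s, -, hs⟩ := Finset.exists_subset_card_eq (s := Finset.univ) (by simpa using hk)
  have hne : {x | ∃ s : Finset n, s.card = k ∧ x = ∑ i ∈ s, f i}.Nonempty := ⟨_, s, hs, rfl⟩
  obtain ⟨T, hT, hsum⟩ := hne.csSup_mem (finite_sumKLargest_set k f)
  exact ⟨T, hT, hsum.symm⟩

variable {k f}

lemma le_of_sum_eq_sumKLargest [DecidableEq n] {T : Finset n} (hT : T.card = k)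
    (hsum : ∑ i ∈ T, f i = sumKLargest k f) {i j : n} (hi : i ∈ T) (hj : j ∉ T) : f j ≤ f i := by
  have hj' : j ∉ T.erase i := fun h => hj (Finset.mem_of_mem_erase h)
  have hcard : (insert j (T.erase i)).card = k := by
    rw [Finset.card_insert_of_notMem hj', Finset.card_erase_of_mem hi, hT]
    have := Finset.card_pos.2 ⟨i, hi⟩
    omega
  have := sum_le_sumKLargest k f hcard
  rw [Finset.sum_insert hj', ← hsum, ← Finset.add_sum_erase T f hi] at this
  linarith

lemma sum_mul_le_sumKLargest (hk : 0 < k) (hkn : k ≤ Fintype.card n) (hf : ∀ i, 0 ≤ f i)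
    {q : n → ℝ} (hq0 : ∀ i, 0 ≤ q i) (hq1 : ∀ i, q i ≤ 1) (hq : ∑ i, q i ≤ k) :
    ∑ i, q i * f i ≤ sumKLargest k f := by
  classical
  obtain ⟨T, hT, hsum⟩ := exists_card_eq_sum_eq_sumKLargest k f hkn
  obtain ⟨i₀, hi₀, hmin⟩ := T.exists_min_image f (Finset.card_pos.1 (hT ▸ hk))
  set e : n → ℝ := fun i => q i - if i ∈ T then 1 else 0
  have key : ∀ i, e i * f i ≤ e i * f i₀ := by
    intro i
    by_cases hi : i ∈ T
    · exact mul_le_mul_of_nonpos_left (hmin i hi) (by simp [e, hi, hq1 i])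
    · exact mul_le_mul_of_nonneg_left (le_of_sum_eq_sumKLargest hT hsum hi₀ hi)
        (by simp [e, hi, hq0 i])
  have hsplit : ∀ g : n → ℝ, ∑ i, e i * g i = ∑ i, q i * g i - ∑ i ∈ T, g i := by
    intro g
    simp [e, sub_mul, Finset.sum_sub_distrib, ite_mul, Finset.sum_ite_mem]
  have := Finset.sum_le_sum fun i (_ : i ∈ Finset.univ) => key i
  rw [hsplit f, hsplit fun _ => f i₀, Finset.sum_const, hT, ← Finset.sum_mul, nsmul_eq_mul] at this
  nlinarith [mul_nonneg (sub_nonneg.2 hq) (hf i₀)]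

end SumKLargest

section Frobenius

variable {m n : Type*} [Fintype m] [Fintype n]

noncomputable def frobeniusVec (A : Matrix m n ℂ) : EuclideanSpace ℂ (m × n) :=
  WithLp.toLp 2 fun p => A p.1 p.2

lemma inner_frobeniusVec (A B : Matrix m n ℂ) :
    inner ℂ (frobeniusVec A) (frobeniusVec B) = (Aᴴ * B).trace := by
  simp only [frobeniusVec, PiLp.inner_apply, RCLike.inner_apply, Matrix.trace, Matrix.diag,
    Matrix.mul_apply, conjTranspose_apply, Fintype.sum_prod_type]
  rw [Finset.sum_comm]
  simp [mul_comm]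

lemma norm_frobeniusVec_sq (A : Matrix m n ℂ) : ‖frobeniusVec A‖ ^ 2 = (Aᴴ * A).trace.re := by
  rw [← inner_frobeniusVec, ← inner_self_eq_norm_sq (𝕜 := ℂ)]
  rfl

lemma normSq_trace_conjTranspose_mul_le (A B : Matrix m n ℂ) :
    Complex.normSq (Aᴴ * B).trace ≤ (Aᴴ * A).trace.re * (Bᴴ * B).trace.re := by
  rw [Complex.normSq_eq_norm_sq, ← inner_frobeniusVec, ← norm_frobeniusVec_sq,
    ← norm_frobeniusVec_sq, ← mul_pow]
  gcongr
  exact norm_inner_le_norm _ _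

lemma sum_normSq_trace_eq_of_orthonormal {ι : Type*} [Fintype ι] [DecidableEq ι]
    (F : ι → Matrix m n ℂ) (hF : ∀ α β, ((F α)ᴴ * F β).trace = if α = β then 1 else 0)
    (hcard : Fintype.card ι = Fintype.card m * Fintype.card n) (M : Matrix m n ℂ) :
    ∑ α, Complex.normSq ((F α)ᴴ * M).trace = (Mᴴ * M).trace.re := by
  have hon : Orthonormal ℂ (frobeniusVec ∘ F) := by
    rw [orthonormal_iff_ite]
    intro α β
    simp only [Function.comp_apply, inner_frobeniusVec, hF]
  have hspan := hon.linearIndependent.span_eq_top_of_card_eq_finrank'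
    (by simp [hcard, finrank_euclideanSpace])
  have := (OrthonormalBasis.mk hon hspan.ge).sum_sq_norm_inner_right (frobeniusVec M)
  simpa [Complex.normSq_eq_norm_sq, inner_frobeniusVec, norm_frobeniusVec_sq] using this

end Frobenius

section Projections

variable {n : Type*} [Fintype n] [DecidableEq n]

lemma trace_conjStarAlgAut (U : Matrix.unitaryGroup n ℂ) (X : Matrix n n ℂ) :
    (Unitary.conjStarAlgAut ℂ _ U X).trace = X.trace := by
  rw [Unitary.conjStarAlgAut_apply, Matrix.trace_mul_cycle, Unitary.star_mul_self_of_mem U.prop,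
    one_mul]

open scoped MatrixOrder in
lemma IsStarProjection.re_diag_mem_Icc {Q : Matrix n n ℂ} (hQ : IsStarProjection Q) (i : n) :
    (Q i i).re ∈ Set.Icc 0 1 := by
  have h0 := (Matrix.nonneg_iff_posSemidef.1 hQ.nonneg).diag_nonneg (i := i)
  have h1 := (Matrix.nonneg_iff_posSemidef.1 hQ.one_sub_nonneg).diag_nonneg (i := i)
  simp only [Matrix.sub_apply, Matrix.one_apply_eq] at h1
  exact ⟨(Complex.le_def.1 h0).1, by simpa using (Complex.le_def.1 h1).1⟩

/-- Ky Fan's maximum principle. -/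
lemma re_trace_mul_le_sumKLargest {A P : Matrix n n ℂ} (hA : A.PosSemidef)
    (hP : IsStarProjection P) {k : ℕ} (hk : 0 < k) (hkn : k ≤ Fintype.card n)
    (htr : P.trace.re ≤ k) : (P * A).trace.re ≤ sumKLargest k hA.isHermitian.eigenvalues := by
  set U := hA.isHermitian.eigenvectorUnitary
  -- `Q` is `P` written in an eigenbasis of `A`: `tr (P A) = ∑ Q i i λ_i` with `Q i i ∈ [0, 1]`
  set Q := Unitary.conjStarAlgAut ℂ _ (star U) P
  have hQ : IsStarProjection Q := hP.map _
  have htrace : (P * A).trace = ∑ i, Q i i * hA.isHermitian.eigenvalues i := by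
    have : (P * A).trace = (Q * diagonal (RCLike.ofReal ∘ hA.isHermitian.eigenvalues)).trace := by
      conv_lhs => rw [hA.isHermitian.spectral_theorem]
      simp only [Q, Unitary.conjStarAlgAut_apply, Unitary.coe_star, star_star]
      rw [← Matrix.mul_assoc, Matrix.trace_mul_comm]
      simp only [Matrix.mul_assoc]
      rfl
    rw [this]
    simp [Matrix.trace, Matrix.mul_diagonal]
  simp only [htrace, Complex.re_sum, Complex.re_mul_ofReal]
  refine sum_mul_le_sumKLargest hk hkn hA.eigenvalues_nonneg (fun i => (hQ.re_diag_mem_Icc i).1)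
    (fun i => (hQ.re_diag_mem_Icc i).2) ?_
  rw [← trace_conjStarAlgAut (star U) P] at htr
  simpa only [Matrix.trace, Matrix.diag, Complex.re_sum] using htr

lemma exists_isStarProjection_mul_eq_self_trace_eq_rank {m : Type*} [Fintype m]
    (M : Matrix n m ℂ) : ∃ P : Matrix n n ℂ, IsStarProjection P ∧ P * M = M ∧ P.trace = M.rank := by
  have hW := Matrix.isHermitian_mul_conjTranspose_self M
  set ν := hW.eigenvalues
  set E : Matrix n n ℂ := diagonal fun i => if ν i = 0 then 0 else 1
  -- the spectral projection of `M Mᴴ` onto its nonzero eigenvalues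
  set P := Unitary.conjStarAlgAut ℂ _ hW.eigenvectorUnitary E
  have hE : IsStarProjection E := by
    rw [isStarProjection_iff', Matrix.star_eq_conjTranspose, diagonal_mul_diagonal,
      diagonal_conjTranspose]
    constructor <;> congr 1 <;> funext i <;> by_cases h : ν i = 0 <;> simp [h]
  have hED : E * diagonal (RCLike.ofReal ∘ ν) = diagonal (RCLike.ofReal ∘ ν) := by
    rw [diagonal_mul_diagonal]
    congr 1
    funext i
    by_cases h : ν i = 0 <;> simp [h]
  have hPW : P * (M * Mᴴ) = M * Mᴴ := by
    conv_lhs => rw [hW.spectral_theorem]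
    rw [← map_mul, hED, ← hW.spectral_theorem]
  refine ⟨P, hE.map _, ?_, ?_⟩
  · have h : (1 - P) * M = 0 :=
      (mul_self_mul_conjTranspose_eq_zero M _).1 (by rw [sub_mul, hPW, one_mul, sub_self])
    rwa [Matrix.sub_mul, Matrix.one_mul, sub_eq_zero, eq_comm] at h
  · rw [trace_conjStarAlgAut, ← rank_self_mul_conjTranspose, hW.rank_eq_card_non_zero_eigs,
      trace_diagonal, Fintype.card_subtype, Finset.card_filter]
    push_cast
    exact Finset.sum_congr rfl fun i _ => by split_ifs <;> simp_all [ν]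

end Projections

lemma normSq_trace_le_gk_mul {d₁ d₂ k : ℕ} (hk : 0 < k) (hkd : k ≤ d₂)
    (G M : Matrix (Fin d₂) (Fin d₁) ℂ) (hM : M.rank ≤ k) :
    Complex.normSq (Gᴴ * M).trace ≤ gk k G * (Mᴴ * M).trace.re := by
  obtain ⟨P, hP, hPM, htr⟩ := exists_isStarProjection_mul_eq_self_trace_eq_rank M
  have hPH : Pᴴ = P := hP.isSelfAdjoint
  have hGM : (Gᴴ * M).trace = ((P * G)ᴴ * M).trace := by
    rw [conjTranspose_mul, hPH, Matrix.mul_assoc, hPM]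
  have hPG : ((P * G)ᴴ * (P * G)).trace.re ≤ gk k G := by
    have : ((P * G)ᴴ * (P * G)).trace = (P * (G * Gᴴ)).trace := by
      rw [conjTranspose_mul, hPH, Matrix.mul_assoc, ← Matrix.mul_assoc P, hP.isIdempotentElem.eq,
        Matrix.trace_mul_comm, Matrix.mul_assoc]
    rw [this]
    exact re_trace_mul_le_sumKLargest (posSemidef_self_mul_conjTranspose G) hP hk (by simpa)
      (by rw [htr]; exact_mod_cast hM)
  calc Complex.normSq (Gᴴ * M).trace
      ≤ ((P * G)ᴴ * (P * G)).trace.re * (Mᴴ * M).trace.re :=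
        hGM ▸ normSq_trace_conjTranspose_mul_le _ _
    _ ≤ gk k G * (Mᴴ * M).trace.re := by
        gcongr
        rw [← norm_frobeniusVec_sq]
        positivity

lemma exists_trace_mul_eq_gk {d₁ d₂ K : ℕ} (hK : K ≤ d₂) (G : Matrix (Fin d₂) (Fin d₁) ℂ) :
    ∃ (Y : Matrix (Fin d₂) (Fin K) ℂ) (X : Matrix (Fin K) (Fin d₁) ℂ),
      (Gᴴ * (Y * X)).trace = gk K G ∧ ((Y * X)ᴴ * (Y * X)).trace = gk K G := by
  have hH := isHermitian_mul_conjTranspose_self G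
  set U : Matrix (Fin d₂) (Fin d₂) ℂ := ↑hH.eigenvectorUnitary
  obtain ⟨T, hT, hsum⟩ := exists_card_eq_sum_eq_sumKLargest K hH.eigenvalues (by simpa)
  set σ := T.orderEmbOfFin hT
  -- the columns of `Y` are the eigenvectors of `G Gᴴ` for its `K` largest eigenvalues
  set Y := U.submatrix id σ
  have hYY : Yᴴ * Y = 1 := by
    rw [conjTranspose_submatrix, ← submatrix_mul _ _ _ _ _ Function.bijective_id,
      ← Matrix.star_eq_conjTranspose, Unitary.star_mul_self_of_mem hH.eigenvectorUnitary.prop]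
    exact submatrix_one_embedding σ.toEmbedding
  have htrace : (Gᴴ * (Y * (Yᴴ * G))).trace = gk K G := by
    have hdiag : star U * (G * Gᴴ) * U = diagonal (RCLike.ofReal ∘ hH.eigenvalues) := by
      simpa using hH.conjStarAlgAut_star_eigenvectorUnitary
    have hsub : Yᴴ * (G * Gᴴ) * Y = (star U * (G * Gᴴ) * U).submatrix σ σ := by
      ext i j
      simp [Y, Matrix.mul_apply]
    rw [← Matrix.mul_assoc, Matrix.trace_mul_comm, ← Matrix.mul_assoc, Matrix.mul_assoc _ G,
      hsub, hdiag, gk, ← hsum]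
    simp only [Matrix.trace, diag_apply, submatrix_apply, diagonal_apply_eq, Function.comp_apply]
    push_cast
    conv_rhs => rw [← T.map_orderEmbOfFin_univ hT, Finset.sum_map]
    rfl
  refine ⟨Y, Yᴴ * G, htrace, ?_⟩
  rw [conjTranspose_mul, conjTranspose_mul, conjTranspose_conjTranspose, Matrix.mul_assoc,
    ← Matrix.mul_assoc Y, ← Matrix.mul_assoc Yᴴ, ← Matrix.mul_assoc Yᴴ, hYY, Matrix.one_mul,
    Matrix.mul_assoc, htrace]

section Ampliation

open scoped Kronecker

lemma star_dotProduct_conjTranspose_mul_self_mulVec {k ρ : Type*} [Fintype k] [Fintype ρ]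
    (D : Matrix ρ k ℂ) (y : k → ℂ) :
    star y ⬝ᵥ ((Dᴴ * D) *ᵥ y) = ∑ r, (Complex.normSq ((D *ᵥ y) r) : ℂ) := by
  rw [← mulVec_mulVec, dotProduct_mulVec, ← star_mulVec]
  simp [dotProduct, Complex.normSq_eq_conj_mul_self]

variable {m n : Type*} [Fintype m]

/-- The map `id_K ⊗ φ`. -/
def ampliation (K : ℕ) (φ : Matrix m m ℂ →ₗ[ℂ] Matrix n n ℂ)
    (a : Matrix (Fin K × m) (Fin K × m) ℂ) : Matrix (Fin K × n) (Fin K × n) ℂ :=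
  Matrix.of fun p q => φ (Matrix.of fun x y => a (p.1, x) (q.1, y)) p.2 q.2

variable {ι : Type*} [Fintype ι] {φ : Matrix m m ℂ →ₗ[ℂ] Matrix n n ℂ}
  {F : ι → Matrix n m ℂ} {c : ι → ℝ}

lemma ampliation_eq_sum_kronecker (hφ : ∀ a, φ a = ∑ α, (c α : ℂ) • (F α * a * (F α)ᴴ))
    {K : ℕ} (a : Matrix (Fin K × m) (Fin K × m) ℂ) :
    ampliation K φ a = ∑ α, (c α : ℂ) •
      (((1 : Matrix (Fin K) (Fin K) ℂ) ⊗ₖ F α) * a * ((1 : Matrix (Fin K) (Fin K) ℂ) ⊗ₖ F α)ᴴ) := by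
  ext p q
  simp [ampliation, hφ, Matrix.sum_apply, Matrix.mul_apply, one_apply, Fintype.sum_prod_type,
    apply_ite (starRingEnd ℂ), mul_ite]

lemma dotProduct_conjTranspose_one_kronecker_mulVec [Fintype n] {K : ℕ} (G : Matrix n m ℂ)
    (b : Fin K × m → ℂ) (y : Fin K × n → ℂ) :
    b ⬝ᵥ (((1 : Matrix (Fin K) (Fin K) ℂ) ⊗ₖ G)ᴴ *ᵥ y) =
      (Gᴴ * (Matrix.of (fun j i => y (i, j)) * Matrix.of fun i t => b (i, t))).trace := by
  simp [dotProduct, Matrix.mulVec, Matrix.trace, Matrix.mul_apply, one_apply,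
    Fintype.sum_prod_type, apply_ite (starRingEnd ℂ), ite_mul, Finset.mul_sum]
  rw [Finset.sum_comm]
  refine Finset.sum_congr rfl fun t _ => ?_
  rw [Finset.sum_comm]
  exact Finset.sum_congr rfl fun j _ => Finset.sum_congr rfl fun i _ => by ring

lemma star_dotProduct_ampliation_mulVec [Fintype n]
    (hφ : ∀ a, φ a = ∑ α, (c α : ℂ) • (F α * a * (F α)ᴴ))
    {K : ℕ} {ρ : Type*} [Fintype ρ] (B : Matrix ρ (Fin K × m) ℂ) (y : Fin K × n → ℂ) :
    star y ⬝ᵥ (ampliation K φ (Bᴴ * B) *ᵥ y) = ∑ r, ((∑ α, c α * Complex.normSq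
      ((F α)ᴴ * (Matrix.of (fun j i => y (i, j)) * Matrix.of fun i t => B r (i, t))).trace : ℝ) :
        ℂ) := by
  rw [ampliation_eq_sum_kronecker hφ, Matrix.sum_mulVec, dotProduct_sum]
  push_cast
  rw [Finset.sum_comm]
  refine Finset.sum_congr rfl fun α _ => ?_
  set C := (1 : Matrix (Fin K) (Fin K) ℂ) ⊗ₖ F α
  have hC : C * (Bᴴ * B) * Cᴴ = (B * Cᴴ)ᴴ * (B * Cᴴ) := by
    simp only [conjTranspose_mul, conjTranspose_conjTranspose, Matrix.mul_assoc]
  rw [Matrix.smul_mulVec, dotProduct_smul, smul_eq_mul, hC,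
    star_dotProduct_conjTranspose_mul_self_mulVec, Finset.mul_sum]
  refine Finset.sum_congr rfl fun r _ => ?_
  rw [← mulVec_mulVec, mulVec, dotProduct_conjTranspose_one_kronecker_mulVec]

end Ampliation

open scoped MatrixOrder in
lemma kPositive_iff_of_kraus {d₁ d₂ K : ℕ} {ι : Type*} [Fintype ι]
    {φ : Matrix (Fin d₁) (Fin d₁) ℂ →ₗ[ℂ] Matrix (Fin d₂) (Fin d₂) ℂ}
    {F : ι → Matrix (Fin d₂) (Fin d₁) ℂ} {c : ι → ℝ}
    (hφ : ∀ a, φ a = ∑ α, (c α : ℂ) • (F α * a * (F α)ᴴ)) :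
    kPositive d₁ d₂ K φ ↔ ∀ (Y : Matrix (Fin d₂) (Fin K) ℂ) (X : Matrix (Fin K) (Fin d₁) ℂ),
      0 ≤ ∑ α, c α * Complex.normSq ((F α)ᴴ * (Y * X)).trace := by
  constructor
  · intro hpos Y X
    set B : Matrix (Fin 1) (Fin K × Fin d₁) ℂ := Matrix.of fun _ p => X p.1 p.2
    have hB : (ampliation K φ (Bᴴ * B)).PosSemidef := hpos _ (posSemidef_conjTranspose_mul_self B)
    have := hB.dotProduct_mulVec_nonneg fun p => Y p.2 p.1
    rw [star_dotProduct_ampliation_mulVec hφ, Fin.sum_univ_one, Complex.zero_le_real] at this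
    exact this
  · intro h a ha
    obtain ⟨B, rfl⟩ := CStarAlgebra.nonneg_iff_eq_star_mul_self.mp ha.nonneg
    change (ampliation K φ (Bᴴ * B)).PosSemidef
    refine posSemidef_iff_dotProduct_mulVec.2 ⟨?_, fun y => ?_⟩
    · rw [ampliation_eq_sum_kronecker hφ]
      simp [IsHermitian, conjTranspose_sum, conjTranspose_smul, Matrix.mul_assoc]
    · rw [star_dotProduct_ampliation_mulVec hφ]
      exact Finset.sum_nonneg fun r _ => Complex.zero_le_real.2 (h _ _)

section Weights

variable {ι : Type*} [Fintype ι] [DecidableEq ι]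

lemma sum_ite_smul_eq_sum_erase_sub {R M : Type*} [Ring R] [AddCommGroup M] [Module R M]
    (l : ι → R) (v : ι → M) (i₀ : ι) :
    ∑ i, (if i = i₀ then -l i₀ else l i) • v i =
      ∑ i ∈ Finset.univ.erase i₀, l i • v i - l i₀ • v i₀ := by
  rw [← Finset.add_sum_erase _ _ (Finset.mem_univ i₀), if_pos rfl, neg_smul, neg_add_eq_sub]
  congr 1
  exact Finset.sum_congr rfl fun i hi => by rw [if_neg (Finset.ne_of_mem_erase hi)]

variable {lam w : ι → ℝ} {i₀ : ι} {g : ℝ}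

lemma mul_le_sum_erase_mul (hlam : 0 ≤ lam i₀) (hg : g < 1) (hw : ∀ i, 0 ≤ w i)
    (hle : ∀ i ∈ Finset.univ.erase i₀, lam i₀ * g / (1 - g) ≤ lam i)
    (hw₀ : w i₀ ≤ g * ∑ i, w i) :
    lam i₀ * w i₀ ≤ ∑ i ∈ Finset.univ.erase i₀, lam i * w i := by
  rw [← Finset.add_sum_erase _ _ (Finset.mem_univ i₀)] at hw₀
  calc lam i₀ * w i₀ ≤ lam i₀ * g / (1 - g) * ∑ i ∈ Finset.univ.erase i₀, w i := by
        rw [div_mul_eq_mul_div, le_div_iff₀ (by linarith)]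
        nlinarith
    _ ≤ ∑ i ∈ Finset.univ.erase i₀, lam i * w i := by
        rw [Finset.mul_sum]
        exact Finset.sum_le_sum fun i hi => mul_le_mul_of_nonneg_right (hle i hi) (hw i)

lemma sum_erase_mul_lt_mul (hg0 : 0 < g) (hg : g < 1) (hw : ∀ i, 0 ≤ w i)
    (hlt : ∀ i ∈ Finset.univ.erase i₀, lam i < lam i₀ * g / (1 - g))
    (hw₀ : w i₀ = g * ∑ i, w i) (hpos : 0 < w i₀) :
    ∑ i ∈ Finset.univ.erase i₀, lam i * w i < lam i₀ * w i₀ := by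
  rw [← Finset.add_sum_erase _ _ (Finset.mem_univ i₀)] at hw₀
  have hrest : 0 < ∑ i ∈ Finset.univ.erase i₀, w i := by nlinarith
  obtain ⟨j, hj, hwj⟩ := Finset.exists_lt_of_sum_lt (s := Finset.univ.erase i₀)
    (f := fun _ => 0) (g := w) (by rwa [Finset.sum_const_zero])
  calc ∑ i ∈ Finset.univ.erase i₀, lam i * w i
      < lam i₀ * g / (1 - g) * ∑ i ∈ Finset.univ.erase i₀, w i := by
        rw [Finset.mul_sum]
        exact Finset.sum_lt_sum (fun i hi => mul_le_mul_of_nonneg_right (hlt i hi).le (hw i))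
          ⟨j, hj, mul_lt_mul_of_pos_right (hlt j hj) hwj⟩
    _ = lam i₀ * w i₀ := by
        rw [div_mul_eq_mul_div, div_eq_iff (by linarith)]
        linear_combination (-lam i₀) * hw₀

end Weights

theorem kPositive_not_succ_kPositive_of_spectral_condition_general (d₁ d₂ k : ℕ)
    (hk1 : 1 ≤ k) (hk2 : k < min d₁ d₂)
    (F : Fin (d₁ * d₂) → Matrix (Fin d₂) (Fin d₁) ℂ)
    (hF : ∀ α β, ((F α)ᴴ * F β).trace = if α = β then 1 else 0)
    (lam : Fin (d₁ * d₂) → ℝ) (hlam : ∀ α, 0 < lam α)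
    (α₁ : Fin (d₁ * d₂))
    (φ : Matrix (Fin d₁) (Fin d₁) ℂ →ₗ[ℂ] Matrix (Fin d₂) (Fin d₂) ℂ)
    (hφ : ∀ a, φ a = (∑ α ∈ Finset.univ.erase α₁, (lam α : ℂ) • (F α * a * (F α)ᴴ))
        - (lam α₁ : ℂ) • (F α₁ * a * (F α₁)ᴴ))
    (hg0 : 0 < gk k (F α₁)) (hgk : gk k (F α₁) ≤ gk (k + 1) (F α₁))
    (hg1 : gk (k + 1) (F α₁) < 1)
    (hcond : ∀ α ∈ Finset.univ.erase α₁,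
      lam α₁ * gk k (F α₁) / (1 - gk k (F α₁)) ≤ lam α ∧
      lam α < lam α₁ * gk (k + 1) (F α₁) / (1 - gk (k + 1) (F α₁))) :
    kPositive d₁ d₂ k φ ∧ ¬ kPositive d₁ d₂ (k + 1) φ := by
  have hkd₂ : k < d₂ := (lt_min_iff.mp hk2).2
  set c : Fin (d₁ * d₂) → ℝ := fun α => if α = α₁ then -lam α₁ else lam α
  have hφc : ∀ a, φ a = ∑ α, (c α : ℂ) • (F α * a * (F α)ᴴ) := fun a => by
    rw [hφ, ← sum_ite_smul_eq_sum_erase_sub]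
    simp only [c, apply_ite ((↑) : ℝ → ℂ), Complex.ofReal_neg]
  have hc (w : Fin (d₁ * d₂) → ℝ) :
      ∑ α, c α * w α = ∑ α ∈ Finset.univ.erase α₁, lam α * w α - lam α₁ * w α₁ :=
    sum_ite_smul_eq_sum_erase_sub lam w α₁
  have hParseval := sum_normSq_trace_eq_of_orthonormal F hF (by simp [mul_comm])
  constructor
  · refine (kPositive_iff_of_kraus hφc).2 fun Y X => ?_
    rw [hc, sub_nonneg]
    have hbound : Complex.normSq ((F α₁)ᴴ * (Y * X)).trace ≤
        gk k (F α₁) * ∑ α, Complex.normSq ((F α)ᴴ * (Y * X)).trace := by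
      rw [hParseval]
      exact normSq_trace_le_gk_mul hk1 hkd₂.le (F α₁) (Y * X)
        ((rank_mul_le_left Y X).trans (rank_le_width Y))
    exact mul_le_sum_erase_mul (hlam α₁).le (hgk.trans_lt hg1)
      (fun α => Complex.normSq_nonneg ((F α)ᴴ * (Y * X)).trace) (fun α hα => (hcond α hα).1) hbound
  · intro hpos
    obtain ⟨Y, X, htr, hnorm⟩ := exists_trace_mul_eq_gk hkd₂ (F α₁)
    have hY := (kPositive_iff_of_kraus hφc).1 hpos Y X
    rw [hc, sub_nonneg] at hY
    have hg : 0 < gk (k + 1) (F α₁) := hg0.trans_le hgk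
    have hextremal : Complex.normSq ((F α₁)ᴴ * (Y * X)).trace =
        gk (k + 1) (F α₁) * ∑ α, Complex.normSq ((F α)ᴴ * (Y * X)).trace := by
      rw [hParseval, hnorm, htr, Complex.normSq_ofReal, Complex.ofReal_re]
    refine hY.not_gt (sum_erase_mul_lt_mul hg hg1
      (fun α => Complex.normSq_nonneg ((F α)ᴴ * (Y * X)).trace) (fun α hα => (hcond α hα).2)
      hextremal ?_)
    rw [htr, Complex.normSq_ofReal]
    positivity

/-- Spectral sandwich condition making
`φ(a) = ∑_{α≥2} λ_α F_α a F_αᴴ − λ₁ F₁ a F₁ᴴ` `k`-positive but not `(k+1)`-positive. -/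
theorem kPositive_not_succ_kPositive_of_spectral_condition (d₁ d₂ k : ℕ)
    (hk1 : 1 ≤ k) (hk2 : k < min d₁ d₂)
    (F : Fin (d₁ * d₂) → Matrix (Fin d₂) (Fin d₁) ℂ)
    (hF : ∀ α β, ((F α)ᴴ * F β).trace = if α = β then 1 else 0)
    (lam : Fin (d₁ * d₂) → ℝ) (hlam : ∀ α, 0 < lam α)
    (α₁ : Fin (d₁ * d₂)) (hα₁ : (α₁ : ℕ) = 0)
    (φ : Matrix (Fin d₁) (Fin d₁) ℂ →ₗ[ℂ] Matrix (Fin d₂) (Fin d₂) ℂ)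
    (hφ : ∀ a, φ a = (∑ α ∈ Finset.univ.erase α₁, (lam α : ℂ) • (F α * a * (F α)ᴴ))
        - (lam α₁ : ℂ) • (F α₁ * a * (F α₁)ᴴ))
    (hg0 : 0 < gk k (F α₁)) (hgk : gk k (F α₁) ≤ gk (k + 1) (F α₁))
    (hg1 : gk (k + 1) (F α₁) < 1)
    (hcond : ∀ α ∈ Finset.univ.erase α₁,
      lam α₁ * gk k (F α₁) / (1 - gk k (F α₁)) ≤ lam α ∧
      lam α < lam α₁ * gk (k + 1) (F α₁) / (1 - gk (k + 1) (F α₁))) :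
    kPositive d₁ d₂ k φ ∧ ¬ kPositive d₁ d₂ (k + 1) φ :=
  kPositive_not_succ_kPositive_of_spectral_condition_general d₁ d₂ k hk1 hk2 F hF lam hlam α₁ φ hφ
    hg0 hgk hg1 hcond
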